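/- arXiv:2202.06445 — 2 statements merged into one kernel-verified Lean document; each statement's English description precedes it below -/
import Mathlib

section
/- Let $\delta \in (0,1)$ and let $G_\delta$ be as below. Then $G_\delta(s) \ge 0$ for all $s \in \mathbb{R}$, $G_\delta(1) = 0$, and $G_\delta(s) \ge \frac{s^2}{2\delta}$ for all $s \le 0$. -/
/-!
For `s ≥ δ`, `G_δ(s) = s log s - s + 1 ≥ 0` because `s - 1 ≤ s log s`. For `s ≤ δ`, `G_δ` is the
second-order Taylor polynomial of that function at `δ`,
`G_δ(s) = (s - δ)² / (2δ) + (s - δ) log δ + G_δ(δ)`, whose three terms are nonnegative once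
`s ≤ δ ≤ 1`. Subtracting `s² / (2δ)` from it leaves the affine function `1 - δ/2 - s (1 - log δ)`,
which is positive for `s ≤ 0`.
-/

open Real

lemma mul_log_sub_one_add_one_nonneg {x : ℝ} (hx : 0 ≤ x) : 0 ≤ x * (log x - 1) + 1 := by
  linarith [self_sub_one_le_mul_log hx]

lemma quadratic_branch_eq_taylor (δ s : ℝ) (hδ : δ ≠ 0) :
    (s ^ 2 - δ ^ 2) / (2 * δ) + s * (log δ - 1) + 1
      = (s - δ) ^ 2 / (2 * δ) + (s - δ) * log δ + (δ * (log δ - 1) + 1) := by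
  field_simp
  ring

lemma quadratic_branch_nonneg {δ s : ℝ} (hδ0 : 0 < δ) (hδ1 : δ ≤ 1) (hs : s ≤ δ) :
    0 ≤ (s ^ 2 - δ ^ 2) / (2 * δ) + s * (log δ - 1) + 1 := by
  rw [quadratic_branch_eq_taylor δ s hδ0.ne']
  have hquad : 0 ≤ (s - δ) ^ 2 / (2 * δ) := by positivity
  have hlin : 0 ≤ (s - δ) * log δ :=
    mul_nonneg_of_nonpos_of_nonpos (by linarith) (log_nonpos hδ0.le hδ1)
  linarith [mul_log_sub_one_add_one_nonneg hδ0.le]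

lemma sq_div_le_quadratic_branch {δ s : ℝ} (hδ0 : 0 < δ) (hδ1 : δ ≤ 1) (hs : s ≤ 0) :
    s ^ 2 / (2 * δ) ≤ (s ^ 2 - δ ^ 2) / (2 * δ) + s * (log δ - 1) + 1 := by
  have hdiff : (s ^ 2 - δ ^ 2) / (2 * δ) + s * (log δ - 1) + 1 - s ^ 2 / (2 * δ)
      = (1 - δ / 2) + (-s) * (1 - log δ) := by
    field_simp
    ring
  have hlog : log δ ≤ 0 := log_nonpos hδ0.le hδ1
  have hlin : 0 ≤ (-s) * (1 - log δ) := mul_nonneg (by linarith) (by linarith)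
  linarith

/-- For `δ ∈ (0,1)`, the function `G_δ` satisfies `G_δ(s) ≥ 0` for all
`s`, `G_δ(1) = 0`, and `G_δ(s) ≥ s²/(2δ)` for all `s ≤ 0`. -/
theorem stmt_8 (δ : ℝ) (hδ0 : 0 < δ) (hδ1 : δ < 1)
    (G : ℝ → ℝ)
    (hG : ∀ s : ℝ, G s = if s ≤ δ then
        (s ^ 2 - δ ^ 2) / (2 * δ) + s * (Real.log δ - 1) + 1
      else s * (Real.log s - 1) + 1) :
    (∀ s : ℝ, 0 ≤ G s) ∧ G 1 = 0 ∧ ∀ s : ℝ, s ≤ 0 → s ^ 2 / (2 * δ) ≤ G s := by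
  refine ⟨fun s => ?_, ?_, fun s hs => ?_⟩
  · rw [hG s]
    split_ifs with hs
    · exact quadratic_branch_nonneg hδ0 hδ1.le hs
    · exact mul_log_sub_one_add_one_nonneg (by linarith)
  · rw [hG 1, if_neg (not_le.mpr hδ1)]
    simp
  · rw [hG s, if_pos (hs.trans hδ0.le)]
    exact sq_div_le_quadratic_branch hδ0 hδ1.le hs
end

section
/- Let $d$, $b$, $D$, $U$, $Z$, $M$ be as below, and assume there exist constants $c_1, c_2, c_3, c_4 > 0$ and $\gamma > 1$ such that $c_1(\sqrt{b} - |q|)^{\gamma} \le M(q) \le c_2(\sqrt{b} - |q|)^{\gamma}$ and $c_3 \le (\sqrt{b} - |q|)\, U'(\tfrac{1}{2}|q|^2) \le c_4$ for all $q \in D$. Then $\int_D \left[\,1 + \left(U(\tfrac{1}{2}|q|^2)\right)^2 + \left(U'(\tfrac{1}{2}|q|^2)\right)^2\,\right] M(q)\,\mathrm{d}q < \infty$. -/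
/-!
Write `t = √b - |q|`. Taking logarithms in `c₁ t^γ ≤ Z⁻¹ e^{-U}` gives `U ≤ |log (Z c₁)| + γ / t`,
and the bounds on `t U'` give `|U'| ≤ max |c₃| |c₄| / t`. Together with `M ≤ c₂ t^γ` the integrand
is `O(t^(γ-2))`, which is integrable over the ball because `γ - 2 > -1`: in polar coordinates this
is the integrability of `(√b - r)^(γ-2)` on `(0, √b)`.
-/

open MeasureTheory Set Metric

theorem integrableOn_Ioo_sub_rpow {R p : ℝ} (hp : -1 < p) :
    IntegrableOn (fun y : ℝ => (R - y) ^ p) (Ioo 0 R) := by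
  have h : IntervalIntegrable (fun y : ℝ => (R - y) ^ p) volume 0 R := by
    simpa using
      ((intervalIntegral.intervalIntegrable_rpow' (a := 0) (b := R) hp).comp_sub_left R).symm
  exact h.def'.mono_set (Ioo_subset_Ioc_self.trans Ioc_subset_uIoc)

theorem integrableOn_ball_sub_norm_rpow {E : Type*} [NormedAddCommGroup E] [NormedSpace ℝ E]
    [FiniteDimensional ℝ E] [MeasurableSpace E] [BorelSpace E] [Nontrivial E]
    (μ : Measure E) [μ.IsAddHaarMeasure] {R p : ℝ} (hp : -1 < p) :
    IntegrableOn (fun x : E => (R - ‖x‖) ^ p) (ball 0 R) μ := by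
  rw [integrableOn_fun_norm_addHaar μ (f := fun y => (R - y) ^ p)]
  simp only [smul_eq_mul]
  exact (integrableOn_Ioo_sub_rpow hp).continuousOn_mul_of_subset
    (continuous_pow _).continuousOn isCompact_uIcc measurableSet_Ioo
    (Ioo_subset_Icc_self.trans Icc_subset_uIcc)

theorem mapsTo_half_sq_norm_ball_sqrt {E : Type*} [SeminormedAddCommGroup E] (b : ℝ) :
    MapsTo (fun q : E => ‖q‖ ^ 2 / 2) (ball 0 √b) (Ico 0 (b / 2)) := fun q hq => by
  have := (Real.lt_sqrt (norm_nonneg q)).1 (mem_ball_zero_iff.1 hq)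
  constructor <;> [positivity; linarith]

theorem le_abs_log_add_div_of_mul_rpow_le_exp_neg {a t γ u : ℝ} (ha : 0 < a) (ht : 0 < t)
    (hγ : 0 ≤ γ) (h : a * t ^ γ ≤ Real.exp (-u)) : u ≤ |Real.log a| + γ / t := by
  have htγ : 0 < t ^ γ := Real.rpow_pos_of_pos ht γ
  have hlog : Real.log a + γ * Real.log t ≤ -u := by
    have := Real.log_le_log (mul_pos ha htγ) h
    rwa [Real.log_exp, Real.log_mul ha.ne' htγ.ne', Real.log_rpow ht] at this
  have hlog_t : -Real.log t ≤ t⁻¹ := by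
    have := Real.log_le_sub_one_of_pos (inv_pos.2 ht)
    rw [Real.log_inv] at this
    linarith
  have := mul_le_mul_of_nonneg_left hlog_t hγ
  rw [← div_eq_mul_inv] at this
  linarith [neg_abs_le (Real.log a)]

theorem one_add_sq_add_sq_mul_le {t R u v A γ C m c : ℝ} (ht : 0 < t) (htR : t ≤ R)
    (hA : 0 ≤ A) (hu₀ : 0 ≤ u) (hu : u ≤ A + γ / t) (hv : |t * v| ≤ C) (hm₀ : 0 ≤ m)
    (hm : m ≤ c * t ^ γ) :
    (1 + u ^ 2 + v ^ 2) * m ≤ c * (R ^ 2 + (A * R + γ) ^ 2 + C ^ 2) * t ^ (γ - 2) := by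
  have htγ : 0 < t ^ γ := Real.rpow_pos_of_pos ht γ
  have hc : 0 ≤ c := nonneg_of_mul_nonneg_left (hm₀.trans hm) htγ
  have hut : u * t ≤ A * R + γ := by
    have := mul_le_mul_of_nonneg_right hu ht.le
    rw [add_mul, div_mul_cancel₀ _ ht.ne'] at this
    linarith [mul_le_mul_of_nonneg_left htR hA]
  have hpoly : (1 + u ^ 2 + v ^ 2) * t ^ 2 ≤ R ^ 2 + (A * R + γ) ^ 2 + C ^ 2 := by
    have h₁ : t ^ 2 ≤ R ^ 2 := pow_le_pow_left₀ ht.le htR 2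
    have h₂ : (u * t) ^ 2 ≤ (A * R + γ) ^ 2 := pow_le_pow_left₀ (by positivity) hut 2
    have h₃ : (t * v) ^ 2 ≤ C ^ 2 := sq_le_sq' (neg_le_of_abs_le hv) (le_of_abs_le hv)
    nlinarith
  calc (1 + u ^ 2 + v ^ 2) * m ≤ (1 + u ^ 2 + v ^ 2) * (c * t ^ γ) := by gcongr
    _ = c * t ^ (γ - 2) * ((1 + u ^ 2 + v ^ 2) * t ^ 2) := by
      rw [Real.rpow_sub ht, Real.rpow_two]; field_simp
    _ ≤ c * (R ^ 2 + (A * R + γ) ^ 2 + C ^ 2) * t ^ (γ - 2) := by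
      rw [mul_right_comm]; gcongr

theorem stmt_11_general (d : ℕ) (hd : 1 ≤ d) (b : ℝ)
    (U U' : ℝ → ℝ)
    (hUnn : ∀ x ∈ Set.Ico (0 : ℝ) (b / 2), 0 ≤ U x)
    (hUderiv : ∀ x ∈ Set.Ico (0 : ℝ) (b / 2),
      HasDerivWithinAt U (U' x) (Set.Ico 0 (b / 2)) x)
    (hU'cont : ContinuousOn U' (Set.Ico 0 (b / 2)))
    (Z : ℝ)
    (hZpos : 0 < Z)
    (M : EuclideanSpace ℝ (Fin d) → ℝ)
    (hM : ∀ q ∈ Metric.ball (0 : EuclideanSpace ℝ (Fin d)) (Real.sqrt b),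
        M q = Z⁻¹ * Real.exp (-U (‖q‖ ^ 2 / 2)))
    (c₁ c₂ c₃ c₄ γ : ℝ)
    (hc₁ : 0 < c₁) (hγ : 1 < γ)
    (hMlow : ∀ q ∈ Metric.ball (0 : EuclideanSpace ℝ (Fin d)) (Real.sqrt b),
      c₁ * (Real.sqrt b - ‖q‖) ^ γ ≤ M q)
    (hMup : ∀ q ∈ Metric.ball (0 : EuclideanSpace ℝ (Fin d)) (Real.sqrt b),
      M q ≤ c₂ * (Real.sqrt b - ‖q‖) ^ γ)
    (hU'low : ∀ q ∈ Metric.ball (0 : EuclideanSpace ℝ (Fin d)) (Real.sqrt b),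
      c₃ ≤ (Real.sqrt b - ‖q‖) * U' (‖q‖ ^ 2 / 2))
    (hU'up : ∀ q ∈ Metric.ball (0 : EuclideanSpace ℝ (Fin d)) (Real.sqrt b),
      (Real.sqrt b - ‖q‖) * U' (‖q‖ ^ 2 / 2) ≤ c₄) :
    IntegrableOn (fun q : EuclideanSpace ℝ (Fin d) =>
      (1 + (U (‖q‖ ^ 2 / 2)) ^ 2 + (U' (‖q‖ ^ 2 / 2)) ^ 2) * M q)
      (Metric.ball 0 (Real.sqrt b)) := by
  set R := √b
  have hmaps := mapsTo_half_sq_norm_ball_sqrt (E := EuclideanSpace ℝ (Fin d)) b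
  have hUcont : ContinuousOn U (Ico 0 (b / 2)) := fun x hx => (hUderiv x hx).continuousWithinAt
  have hU : ContinuousOn (fun q : EuclideanSpace ℝ (Fin d) => U (‖q‖ ^ 2 / 2)) (ball 0 R) :=
    hUcont.comp (by fun_prop) hmaps
  have hU' : ContinuousOn (fun q : EuclideanSpace ℝ (Fin d) => U' (‖q‖ ^ 2 / 2)) (ball 0 R) :=
    hU'cont.comp (by fun_prop) hmaps
  have hcont : ContinuousOn (fun q : EuclideanSpace ℝ (Fin d) =>
      (1 + (U (‖q‖ ^ 2 / 2)) ^ 2 + (U' (‖q‖ ^ 2 / 2)) ^ 2) * M q) (ball 0 R) :=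
    (((continuousOn_const.add (hU.pow 2)).add (hU'.pow 2)).mul
      (continuousOn_const.mul (Real.continuous_exp.comp_continuousOn hU.neg))).congr
      fun q hq => by rw [hM q hq]; rfl
  have : Nontrivial (EuclideanSpace ℝ (Fin d)) :=
    Module.nontrivial_of_finrank_pos (R := ℝ) (by rwa [finrank_euclideanSpace_fin])
  refine (((integrableOn_ball_sub_norm_rpow volume (R := R) (p := γ - 2) (by linarith)).const_mul
    (c₂ * (R ^ 2 + (|Real.log (Z * c₁)| * R + γ) ^ 2 + max |c₃| |c₄| ^ 2))).mono'
    (hcont.aestronglyMeasurable measurableSet_ball)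
    ((ae_restrict_iff' measurableSet_ball).2 (.of_forall fun q hq => ?_)))
  have ht : 0 < R - ‖q‖ := sub_pos.2 (mem_ball_zero_iff.1 hq)
  have hM₀ : 0 ≤ M q := by rw [hM q hq]; positivity
  have hexp : Z * c₁ * (R - ‖q‖) ^ γ ≤ Real.exp (-U (‖q‖ ^ 2 / 2)) := by
    have := mul_le_mul_of_nonneg_left (hMlow q hq) hZpos.le
    rwa [hM q hq, ← mul_assoc, ← mul_assoc, mul_inv_cancel₀ hZpos.ne', one_mul] at this
  rw [Real.norm_of_nonneg (mul_nonneg (by positivity) hM₀)]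
  exact one_add_sq_add_sq_mul_le ht (sub_le_self _ (norm_nonneg q)) (abs_nonneg _)
    (hUnn _ (hmaps hq))
    (le_abs_log_add_div_of_mul_rpow_le_exp_neg (by positivity) ht (by linarith) hexp)
    (abs_le_max_abs_abs (hU'low q hq) (hU'up q hq)) hM₀ (hMup q hq)

/-- Under the FENE-type growth conditions on the normalized
Maxwellian `M` and the spring potential `U` on the ball `D = B(0, √b)`, the function
`q ↦ [1 + U(|q|²/2)² + U'(|q|²/2)²] M(q)` is integrable over `D`. -/
theorem stmt_11 (d : ℕ) (hd : 1 ≤ d) (b : ℝ) (hb : 0 < b)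
    (U U' : ℝ → ℝ)
    (hU0 : U 0 = 0)
    (hUnn : ∀ x ∈ Set.Ico (0 : ℝ) (b / 2), 0 ≤ U x)
    (hUderiv : ∀ x ∈ Set.Ico (0 : ℝ) (b / 2),
      HasDerivWithinAt U (U' x) (Set.Ico 0 (b / 2)) x)
    (hU'cont : ContinuousOn U' (Set.Ico 0 (b / 2)))
    (Z : ℝ)
    (hZint : IntegrableOn (fun q : EuclideanSpace ℝ (Fin d) =>
        Real.exp (-U (‖q‖ ^ 2 / 2))) (Metric.ball 0 (Real.sqrt b)))
    (hZ : Z = ∫ q in Metric.ball (0 : EuclideanSpace ℝ (Fin d)) (Real.sqrt b),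
        Real.exp (-U (‖q‖ ^ 2 / 2)))
    (hZpos : 0 < Z)
    (M : EuclideanSpace ℝ (Fin d) → ℝ)
    (hM : ∀ q ∈ Metric.ball (0 : EuclideanSpace ℝ (Fin d)) (Real.sqrt b),
        M q = Z⁻¹ * Real.exp (-U (‖q‖ ^ 2 / 2)))
    (c₁ c₂ c₃ c₄ γ : ℝ)
    (hc₁ : 0 < c₁) (hc₂ : 0 < c₂) (hc₃ : 0 < c₃) (hc₄ : 0 < c₄) (hγ : 1 < γ)
    (hMlow : ∀ q ∈ Metric.ball (0 : EuclideanSpace ℝ (Fin d)) (Real.sqrt b),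
      c₁ * (Real.sqrt b - ‖q‖) ^ γ ≤ M q)
    (hMup : ∀ q ∈ Metric.ball (0 : EuclideanSpace ℝ (Fin d)) (Real.sqrt b),
      M q ≤ c₂ * (Real.sqrt b - ‖q‖) ^ γ)
    (hU'low : ∀ q ∈ Metric.ball (0 : EuclideanSpace ℝ (Fin d)) (Real.sqrt b),
      c₃ ≤ (Real.sqrt b - ‖q‖) * U' (‖q‖ ^ 2 / 2))
    (hU'up : ∀ q ∈ Metric.ball (0 : EuclideanSpace ℝ (Fin d)) (Real.sqrt b),
      (Real.sqrt b - ‖q‖) * U' (‖q‖ ^ 2 / 2) ≤ c₄) :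
    IntegrableOn (fun q : EuclideanSpace ℝ (Fin d) =>
      (1 + (U (‖q‖ ^ 2 / 2)) ^ 2 + (U' (‖q‖ ^ 2 / 2)) ^ 2) * M q)
      (Metric.ball 0 (Real.sqrt b)) :=
  stmt_11_general d hd b U U' hUnn hUderiv hU'cont Z hZpos M hM c₁ c₂ c₃ c₄ γ hc₁ hγ hMlow hMup
    hU'low hU'up
end
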